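/- Measurability of forcing sets: for any iCPL-structure M = (W, ≼, i), any finite set of names X, any w ∈ W, and any iCPL formula A with FN(A) ⊆ X, the set {ω ∈ (2^ℕ)^X | w,ω ⊩^X_M A} is a Borel subset of (2^ℕ)^X. -/

import Mathlib

noncomputable section

/-! Rational probabilities in `(0,1]`. -/
abbrev Prob : Type := {q : ℚ // 0 < q ∧ q ≤ 1}

instance : Mul Prob :=
  ⟨fun a b => ⟨a.1 * b.1, mul_pos a.2.1 b.2.1, by nlinarith [a.2.1, a.2.2, b.2.1, b.2.2]⟩⟩

def Prob.one : Prob := ⟨1, by norm_num⟩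
open MeasureTheory in
/-- The fair-coin (Bernoulli(1/2) product) measure on the Cantor space `2^ℕ`:
the pushforward of the uniform measure on `[0,1)` along the binary-digit map, so
that each cylinder `{ω | ω n = 1}` has measure `1/2` and distinct coordinates are
independent. -/
noncomputable def coinN : Measure (ℕ → Bool) :=
  Measure.map (fun (x : ℝ) (n : ℕ) => decide (Int.floor (x * 2 ^ (n + 1)) % 2 = 1))
    (volume.restrict (Set.Ico (0 : ℝ) 1))
open MeasureTheory in
/-- The fair-coin product measure on the product `(2^ℕ)^𝒜` of Cantor spaces over all
names: the pushforward of the coin measure on `2^ℕ` along an unpairing, so that each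
cylinder `{ω | ω a i = 1}` has measure `1/2` and all coordinates are independent. -/
noncomputable def coinNN : Measure (ℕ → ℕ → Bool) :=
  Measure.map (fun ω a i => ω (Nat.pair a i)) coinN
/-! ## Formulas of intuitionistic counting propositional logic `iCPL`:
`A ::= ⊤ | ⊥ | x_a^i | p | A∧A | A∨A | A→A | C^q_a A`. -/

inductive Form : Type
  | top : Form
  | bot : Form
  | bvar : ℕ → ℕ → Form       -- Boolean propositional variable `x_a^i`
  | pvar : ℕ → Form           -- intuitionistic propositional variable `p`
  | conj : Form → Form → Form
  | disj : Form → Form → Form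
  | imp : Form → Form → Form
  | cnt : Prob → ℕ → Form → Form    -- counting quantifier `C^q_a A` (binding `a`)
deriving DecidableEq

namespace Form

/-- Free names of a formula (`C^q_a` binds the name `a`). -/
def FN : Form → Finset ℕ
  | top => ∅
  | bot => ∅
  | bvar a _ => {a}
  | pvar _ => ∅
  | conj A B => FN A ∪ FN B
  | disj A B => FN A ∪ FN B
  | imp A B => FN A ∪ FN B
  | cnt _ a A => (FN A).erase a

/-- The Boolean variables `(a, i)` occurring in a formula. -/
def bvars : Form → Finset (ℕ × ℕ)
  | top => ∅
  | bot => ∅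
  | bvar a i => {(a, i)}
  | pvar _ => ∅
  | conj A B => bvars A ∪ bvars B
  | disj A B => bvars A ∪ bvars B
  | imp A B => bvars A ∪ bvars B
  | cnt _ _ A => bvars A

end Form

/-- Boolean formulas: built from `⊤, ⊥, x_a^i` using `¬, ∧, ∨` only
(negation `¬b` being `b → ⊥`). -/
inductive IsBool : Form → Prop
  | top : IsBool .top
  | bot : IsBool .bot
  | bvar (a i : ℕ) : IsBool (.bvar a i)
  | neg {b : Form} (h : IsBool b) : IsBool (.imp b .bot)
  | conj {b c : Form} (hb : IsBool b) (hc : IsBool c) : IsBool (.conj b c)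
  | disj {b c : Form} (hb : IsBool b) (hc : IsBool c) : IsBool (.disj b c)

/-- Classical evaluation of a (Boolean) formula under a valuation `ω` (on the
non-Boolean constructors the value is irrelevant and set to `false`). -/
def bevalF (ω : ℕ → ℕ → Bool) : Form → Bool
  | .top => true
  | .bot => false
  | .bvar a i => ω a i
  | .pvar _ => false
  | .conj A B => bevalF ω A && bevalF ω B
  | .disj A B => bevalF ω A || bevalF ω B
  | .imp A B => !bevalF ω A || bevalF ω B
  | .cnt _ _ _ => false

/-- The measure `μ(b)` of the set of valuations satisfying a Boolean formula. -/
noncomputable def muF (b : Form) : ENNReal :=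
  coinNN {ω : ℕ → ℕ → Bool | bevalF ω b = true}

/-! ## Kripke-style `iCPL`-structures and forcing.

Environments are represented as total maps `ω : 𝒜 → 2^ℕ` assigning an element of
the Cantor space to every name (forcing of a formula `A` with `FN(A) ⊆ X` only
depends on the restriction of `ω` to `X`, so this is the forcing relation
`w, ω ⊩^X_M A` for every sufficiently large finite set `X` of names). -/

/-- An `iCPL`-structure `(W, ≼, i)`: a countable set of worlds, preordered, with an
interpretation of the intuitionistic propositional variables as upper subsets. -/
structure ICPLStructure : Type 1 where
  W : Type
  countable : Countable W
  le : W → W → Prop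
  le_refl : ∀ w, le w w
  le_trans : ∀ u v w, le u v → le v w → le u w
  I : ℕ → Set W
  I_up : ∀ p u v, le u v → u ∈ I p → v ∈ I p

/-- `ω + ω'`: update of the environment `ω` at the name `a` by `ω' ∈ 2^ℕ`. -/
def updName (ω : ℕ → ℕ → Bool) (a : ℕ) (ω' : ℕ → Bool) : ℕ → ℕ → Bool :=
  fun b => if b = a then ω' else ω b

/-- The forcing relation `w, ω ⊩_M A`. -/
def Force (M : ICPLStructure) : Form → M.W → (ℕ → ℕ → Bool) → Prop
  | .top, _, _ => True
  | .bot, _, _ => False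
  | .bvar a i, _, ω => ω a i = true
  | .pvar p, w, _ => w ∈ M.I p
  | .conj A B, w, ω => Force M A w ω ∧ Force M B w ω
  | .disj A B, w, ω => Force M A w ω ∨ Force M B w ω
  | .imp A B, w, ω => ∀ w', M.le w w' → Force M A w' ω → Force M B w' ω
  | .cnt q a A, w, ω =>
      ENNReal.ofReal ((q : ℚ) : ℝ) ≤ coinN {ω' : ℕ → Bool | Force M A w (updName ω a ω')}

/-- Extension of an environment `ω ∈ (2^ℕ)^X` over a finite set `X` of names to a
total environment (by `false` outside `X`); since forcing of a formula `A` with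
`FN(A) ⊆ X` only depends on the names in `X`, this realizes `w, ω ⊩^X_M A`. -/
def extEnv (X : Finset ℕ) (ω : {a // a ∈ X} → ℕ → Bool) : ℕ → ℕ → Bool :=
  fun a i => if h : a ∈ X then ω ⟨a, h⟩ i else false

open MeasureTheory

lemma measurable_updName (a : ℕ) :
    Measurable fun p : (ℕ → ℕ → Bool) × (ℕ → Bool) => updName p.1 a p.2 := by
  refine measurable_pi_lambda _ fun b => ?_
  by_cases h : b = a
  · simpa only [updName, h, if_true] using measurable_snd
  · simpa only [updName, h, if_false] using measurable_fst.eval (a := b)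

lemma measurable_extEnv (X : Finset ℕ) : Measurable (extEnv X) := by
  refine measurable_pi_lambda _ fun a => ?_
  unfold extEnv
  by_cases h : a ∈ X
  · simpa only [h, dif_pos] using measurable_pi_apply (⟨a, h⟩ : {a // a ∈ X})
  · simpa only [h, dif_neg, not_false_iff] using measurable_const

instance : SFinite coinN := by
  unfold coinN
  infer_instance

lemma measurable_measure_setOf_updName {ν : Measure (ℕ → Bool)} [SFinite ν]
    {p : (ℕ → ℕ → Bool) → Prop} (hp : Measurable p) (a : ℕ) :
    Measurable fun ω => ν {ω' | p (updName ω a ω')} :=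
  measurable_measure_prodMk_left
    (measurableSet_setOfPred.2 (hp.comp (measurable_updName a)))

/-- For `C^q_a` this is the measurability of `x ↦ ν (s_x)` for a measurable `s` in a
product; for `→` it is a countable intersection because `W` is countable. -/
lemma measurable_force (M : ICPLStructure) (A : Form) (w : M.W) :
    Measurable (Force M A w) := by
  have := M.countable
  induction A generalizing w with
  | top => exact measurable_const
  | bot => exact measurable_const
  | bvar a i =>
      have : Measurable fun ω : ℕ → ℕ → Bool => ω a i :=
        (measurable_pi_apply i).comp (measurable_pi_apply a)
      exact measurableSet_setOfPred.1 (this (measurableSet_singleton true))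
  | pvar p => exact measurable_const
  | conj A B ihA ihB => exact (ihA w).and (ihB w)
  | disj A B ihA ihB => exact (ihA w).or (ihB w)
  | imp A B ihA ihB =>
      exact Measurable.forall fun w' => measurable_const.imp ((ihA w').imp (ihB w'))
  | cnt q a A ihA =>
      exact measurableSet_setOfPred.1 <|
        measurableSet_le measurable_const (measurable_measure_setOf_updName (ihA w) a)

theorem forcing_set_measurable_general (M : ICPLStructure) (X : Finset ℕ) (A : Form)
    (w : M.W) :
    MeasurableSet {ω : {a // a ∈ X} → ℕ → Bool | Force M A w (extEnv X ω)} :=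
  measurableSet_setOfPred.2 ((measurable_force M A w).comp (measurable_extEnv X))

/-- **Measurability of forcing sets.**  For any `iCPL`-structure `M`,
finite set of names `X`, world `w` and formula `A` with `FN(A) ⊆ X`, the set
`{ω ∈ (2^ℕ)^X | w, ω ⊩^X_M A}` is a Borel subset of `(2^ℕ)^X` (i.e. measurable for
the product σ-algebra, which coincides with the Borel σ-algebra of the product
topology). -/
theorem forcing_set_measurable (M : ICPLStructure) (X : Finset ℕ) (A : Form)
    (hA : A.FN ⊆ X) (w : M.W) :
    MeasurableSet {ω : {a // a ∈ X} → ℕ → Bool | Force M A w (extEnv X ω)} :=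
  forcing_set_measurable_general M X A w
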